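/- arXiv:math/0412258 — 2 statements merged into one kernel-verified Lean document; each statement's English description precedes it below -/
import Mathlib

section
/- Let X be a CAT(0) space and F a convex subset. If γ : [0,1] → X is a continuous path lying entirely in the complement of F, and the nearest-point projection π_F : X → F satisfies: for any geodesic segment [x,y] with x, y ∉ F whose projections π_F(x) ≠ π_F(y), the segment [x,y] meets F — then π_F ∘ γ is constant. -/
open Set

/-- A geodesic space: any two points are joined by a geodesic segment. -/
def IsGeodesicSpace (X : Type*) [MetricSpace X] : Prop :=
  ∀ x y : X, ∃ g : ℝ → X, g 0 = x ∧ g (dist x y) = y ∧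
    ∀ s ∈ Icc (0 : ℝ) (dist x y), ∀ t ∈ Icc (0 : ℝ) (dist x y),
      dist (g s) (g t) = |s - t|

/-- A CAT(0) space: a geodesic space satisfying the CN-inequality of Bruhat–Tits. -/
def IsCAT0 (X : Type*) [MetricSpace X] : Prop :=
  IsGeodesicSpace X ∧ ∀ x y z m : X,
    dist y m = dist y z / 2 → dist z m = dist y z / 2 →
      dist x m ^ 2 ≤ (dist x y ^ 2 + dist x z ^ 2) / 2 - dist y z ^ 2 / 4

/-- `g` is a (unit-speed) geodesic segment from `x` to `y`, parametrized on
`[0, dist x y]`. -/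
def GeodSeg {X : Type*} [MetricSpace X] (g : ℝ → X) (x y : X) : Prop :=
  g 0 = x ∧ g (dist x y) = y ∧
    ∀ s ∈ Icc (0 : ℝ) (dist x y), ∀ t ∈ Icc (0 : ℝ) (dist x y),
      dist (g s) (g t) = |s - t|

/-- Let `F` be a convex subset of a CAT(0) space with 1-Lipschitz nearest-point
projection `π`, such that any geodesic between two points outside `F` with distinct
projections must meet `F`.  Then the projection of any continuous path in the complement of
`F` is constant. -/
theorem projection_constant_on_paths_avoiding_F
    {X : Type*} [MetricSpace X] (hX : IsCAT0 X)
    (F : Set X) (hFne : F.Nonempty)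
    (hFconv : ∀ x ∈ F, ∀ y ∈ F, ∀ g : ℝ → X, GeodSeg g x y → g '' Icc 0 (dist x y) ⊆ F)
    (π : X → X) (hmem : ∀ x, π x ∈ F)
    (hnear : ∀ x, ∀ z ∈ F, dist x (π x) ≤ dist x z)
    (hlip : LipschitzWith 1 π)
    (hsep : ∀ x y : X, x ∉ F → y ∉ F → π x ≠ π y →
      ∀ g : ℝ → X, GeodSeg g x y → ∃ t ∈ Icc (0 : ℝ) (dist x y), g t ∈ F)
    (γ : ℝ → X) (hγc : ContinuousOn γ (Icc 0 1))
    (hγ : ∀ t ∈ Icc (0 : ℝ) 1, γ t ∉ F) :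
    ∀ s ∈ Icc (0 : ℝ) 1, ∀ t ∈ Icc (0 : ℝ) 1, π (γ s) = π (γ t) := by
  -- Work on the subtype `Icc 0 1`, which is a preconnected space.
  set f : Icc (0 : ℝ) 1 → X := fun t => π (γ t) with hf
  have hγr : Continuous ((Icc (0 : ℝ) 1).restrict γ) :=
    continuousOn_iff_continuous_restrict.1 hγc
  have hloc : IsLocallyConstant f := by
    rw [IsLocallyConstant.iff_eventually_eq]
    intro t₀
    have hne : γ t₀ ∉ F := hγ _ t₀.2
    have hr : 0 < dist (γ t₀) (π (γ t₀)) := by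
      rw [dist_pos]
      intro h
      exact hne (h ▸ hmem (γ t₀))
    set r := dist (γ t₀) (π (γ t₀))
    have hcont : ∀ᶠ (t : Icc (0:ℝ) 1) in nhds t₀, dist (γ (t:ℝ)) (γ (t₀:ℝ)) < r := by
      have : Continuous fun t : Icc (0:ℝ) 1 => dist (γ t) (γ t₀) :=
        hγr.dist continuous_const
      have := this.continuousAt (x := t₀)
      have h0 : dist (γ (t₀ : ℝ)) (γ (t₀ : ℝ)) < r := by simpa using hr
      exact this.eventually_lt continuousAt_const h0
    filter_upwards [hcont] with t ht
    by_contra hneq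
    obtain ⟨g, hg0, hgd, hgiso⟩ := hX.1 (γ t₀) (γ t)
    obtain ⟨u, hu, hguF⟩ :=
      hsep (γ t₀) (γ t) (hγ _ t₀.2) (hγ _ t.2) (Ne.symm hneq) g ⟨hg0, hgd, hgiso⟩
    have hd : dist (γ (t₀:ℝ)) (g u) = u := by
      have := hgiso 0 ⟨le_refl 0, dist_nonneg⟩ u hu
      rw [hg0] at this
      rw [this, abs_of_nonpos (by linarith [hu.1])]
      ring
    have h1 : r ≤ dist (γ (t₀:ℝ)) (g u) := hnear _ _ hguF
    have h2 : u ≤ dist (γ (t₀:ℝ)) (γ (t:ℝ)) := hu.2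
    rw [dist_comm] at ht
    rw [hd] at h1
    linarith
  intro s hs t ht
  exact hloc.apply_eq_of_isPreconnected isPreconnected_univ (x := ⟨s, hs⟩) (y := ⟨t, ht⟩)
    trivial trivial
end

section
/- Let X be a geodesic metric space, F ⊂ X, and suppose there is D > 0 such that every geodesic segment [p,q] either has d(π_F(p), π_F(q)) ≤ D or comes within distance D of F, and every triangle Δ(p, q, π_F(p)) with q ∈ F is D-thin. Then there is D₂ > 0 (depending only on D) such that whenever d(π_F(p), π_F(q)) > D₂, the geodesic [p,q] passes within D₂ of both π_F(p) and π_F(q). -/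
/-!
Run along `[p, q]` and let `t₀` be the first time the geodesic enters the closed
`D`-neighbourhood of `F`; one exists because the projections of `p` and `q` are more than `D`
apart. Every initial subsegment `[p, g s]` with `s < t₀` stays away from that neighbourhood, so
the dichotomy puts `π (g s)` within `D` of `π p`, while `g s` itself is almost within `D` of
`F`. Letting `s ↑ t₀` gives `dist (g t₀) (π p) ≤ 2 D`. The same argument on the reversed
geodesic handles `π q`.
-/

open Set

/-- The image of a geodesic segment from `x` to `y` (a "side"). -/
def SegImg {X : Type*} [MetricSpace X] (g : ℝ → X) (x y : X) : Set X :=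
  g '' Icc (0 : ℝ) (dist x y)

theorem dist_self_proj_le_infDist {X : Type*} [MetricSpace X] {F : Set X} {π : X → X}
    (hmem : ∀ x, π x ∈ F) (hnear : ∀ x, ∀ z ∈ F, dist x (π x) ≤ dist x z) (x : X) :
    dist x (π x) ≤ Metric.infDist x F :=
  (Metric.le_infDist ⟨π x, hmem x⟩).2 (hnear x)

namespace GeodSeg

variable {X : Type*} [MetricSpace X] {g : ℝ → X} {p q : X}

theorem dist_apply_apply (hg : GeodSeg g p q) {s t : ℝ} (hs : s ∈ Icc 0 (dist p q))
    (ht : t ∈ Icc 0 (dist p q)) : dist (g s) (g t) = |s - t| :=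
  hg.2.2 s hs t ht

theorem dist_left_apply (hg : GeodSeg g p q) {s : ℝ} (hs : s ∈ Icc 0 (dist p q)) :
    dist p (g s) = s := by
  rw [← hg.1, hg.dist_apply_apply ⟨le_rfl, dist_nonneg⟩ hs, zero_sub, abs_neg,
    abs_of_nonneg hs.1]

theorem restrict (hg : GeodSeg g p q) {s : ℝ} (hs : s ∈ Icc 0 (dist p q)) :
    GeodSeg g p (g s) := by
  have hsub : Icc 0 (dist p (g s)) ⊆ Icc 0 (dist p q) := by
    rw [hg.dist_left_apply hs]
    exact Icc_subset_Icc_right hs.2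
  refine ⟨hg.1, by rw [hg.dist_left_apply hs], fun a ha b hb => ?_⟩
  exact hg.dist_apply_apply (hsub ha) (hsub hb)

theorem reverse (hg : GeodSeg g p q) : GeodSeg (fun u => g (dist p q - u)) q p := by
  have hflip : ∀ u ∈ Icc 0 (dist q p), dist p q - u ∈ Icc 0 (dist p q) := by
    rw [dist_comm q p]
    exact fun u hu => ⟨by linarith [hu.2], by linarith [hu.1]⟩
  refine ⟨by simp only [sub_zero, hg.2.1], by simp only [dist_comm q p, sub_self, hg.1],
    fun a ha b hb => ?_⟩
  rw [hg.dist_apply_apply (hflip a ha) (hflip b hb), abs_sub_comm]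
  congr 1
  ring

end GeodSeg

theorem GeodSeg.dist_apply_proj_le {X : Type*} [MetricSpace X] {F : Set X} {π : X → X}
    (hmem : ∀ x, π x ∈ F) (hnear : ∀ x, ∀ z ∈ F, dist x (π x) ≤ dist x z)
    {g : ℝ → X} {p q : X} (hg : GeodSeg g p q) {s r t : ℝ} (hs : 0 ≤ s) (hsr : s ≤ r)
    (hrt : r ≤ t) (ht : t ≤ dist p q) :
    dist (g r) (π p) ≤ dist (π (g s)) (π p) + Metric.infDist (g t) F + (r - s) + (t - s) := by
  have hs' : s ∈ Icc 0 (dist p q) := ⟨hs, by linarith⟩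
  have hr' : r ∈ Icc 0 (dist p q) := ⟨by linarith, by linarith⟩
  have ht' : t ∈ Icc 0 (dist p q) := ⟨by linarith, ht⟩
  have hgs : dist (g s) (π (g s)) ≤ Metric.infDist (g t) F + (t - s) :=
    calc dist (g s) (π (g s))
        ≤ Metric.infDist (g s) F := dist_self_proj_le_infDist hmem hnear _
      _ ≤ Metric.infDist (g t) F + dist (g s) (g t) := Metric.infDist_le_infDist_add_dist
      _ = Metric.infDist (g t) F + (t - s) := by
        rw [hg.dist_apply_apply hs' ht', abs_sub_comm, abs_of_nonneg (by linarith)]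
  calc dist (g r) (π p)
      ≤ dist (g r) (g s) + dist (g s) (π (g s)) + dist (π (g s)) (π p) :=
        dist_triangle4 _ _ _ _
    _ ≤ (r - s) + (Metric.infDist (g t) F + (t - s)) + dist (π (g s)) (π p) := by
        rw [hg.dist_apply_apply hr' hs', abs_of_nonneg (by linarith)]
        gcongr
    _ = _ := by ring

section Dichotomy

variable {X : Type*} [MetricSpace X] {F : Set X} {π : X → X} {D : ℝ}
  (hmem : ∀ x, π x ∈ F) (hnear : ∀ x, ∀ z ∈ F, dist x (π x) ≤ dist x z)
  (hdichotomy : ∀ p q : X, ∀ g : ℝ → X, GeodSeg g p q →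
    dist (π p) (π q) ≤ D ∨ ∃ t ∈ Icc (0 : ℝ) (dist p q), Metric.infDist (g t) F ≤ D)
include hdichotomy

theorem GeodSeg.dist_proj_apply_le_of_forall_lt_infDist {p q : X} {g : ℝ → X}
    (hg : GeodSeg g p q) {s : ℝ} (hs : s ∈ Icc 0 (dist p q))
    (hfar : ∀ u ∈ Icc 0 s, D < Metric.infDist (g u) F) : dist (π (g s)) (π p) ≤ D := by
  rw [dist_comm]
  refine (hdichotomy p (g s) g (hg.restrict hs)).resolve_right ?_
  rintro ⟨u, hu, huD⟩
  rw [hg.dist_left_apply hs] at hu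
  exact (hfar u hu).not_ge huD

include hmem hnear

theorem GeodSeg.exists_dist_proj_left_le {p q : X} {g : ℝ → X} (hg : GeodSeg g p q)
    (hfar : D < dist (π p) (π q)) :
    ∃ s ∈ Icc (0 : ℝ) (dist p q), dist (g s) (π p) ≤ 2 * D := by
  set T := {t ∈ Icc (0 : ℝ) (dist p q) | Metric.infDist (g t) F ≤ D}
  obtain ⟨t₁, ht₁⟩ : T.Nonempty := (hdichotomy p q g hg).resolve_left hfar.not_ge
  have hTbdd : BddBelow T := ⟨0, fun t ht => ht.1.1⟩
  set t₀ := sInf T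
  have ht₀ : t₀ ∈ Icc 0 (dist p q) :=
    ⟨le_csInf ⟨t₁, ht₁⟩ fun t ht => ht.1.1, (csInf_le hTbdd ht₁).trans ht₁.1.2⟩
  have hbefore : ∀ s ∈ Icc 0 t₀, (s = 0 ∨ s < t₀) → dist (π (g s)) (π p) ≤ D := by
    rintro s hs (rfl | hlt)
    · rw [hg.1, dist_self]
      exact Metric.infDist_nonneg.trans ht₁.2
    have hs' : s ∈ Icc 0 (dist p q) := ⟨hs.1, hs.2.trans ht₀.2⟩
    refine hg.dist_proj_apply_le_of_forall_lt_infDist hdichotomy hs'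
      fun u hu => not_le.1 fun huD => ?_
    exact (csInf_le hTbdd ⟨⟨hu.1, hu.2.trans hs'.2⟩, huD⟩).not_gt (hu.2.trans_lt hlt)
  -- `t₀` need not lie in `T`: approximate it by `t ∈ T` from above and by `s` from below.
  refine ⟨t₀, ht₀, le_of_forall_pos_le_add fun ε hε => ?_⟩
  obtain ⟨t, htT, htlt⟩ : ∃ t ∈ T, t < t₀ + ε / 2 :=
    Real.lt_sInf_add_pos ⟨t₁, ht₁⟩ (half_pos hε)
  set s := max 0 (t₀ - ε / 4)
  have hs : s ∈ Icc 0 t₀ := ⟨le_max_left _ _, max_le ht₀.1 (by linarith)⟩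
  have hs0 : s = 0 ∨ s < t₀ :=
    (max_choice 0 (t₀ - ε / 4)).imp id fun h => by simp only [s, h]; linarith
  have hst₀ : t₀ - s ≤ ε / 4 := by linarith [le_max_right 0 (t₀ - ε / 4)]
  calc dist (g t₀) (π p)
      ≤ dist (π (g s)) (π p) + Metric.infDist (g t) F + (t₀ - s) + (t - s) :=
        hg.dist_apply_proj_le hmem hnear hs.1 hs.2 (csInf_le hTbdd htT) htT.1.2
    _ ≤ D + D + (t₀ - s) + (t - s) := by gcongr; exacts [hbefore s hs hs0, htT.2]
    _ ≤ 2 * D + ε := by linarith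

theorem GeodSeg.exists_dist_proj_right_le {p q : X} {g : ℝ → X} (hg : GeodSeg g p q)
    (hfar : D < dist (π p) (π q)) :
    ∃ t ∈ Icc (0 : ℝ) (dist p q), dist (g t) (π q) ≤ 2 * D := by
  obtain ⟨s, hs, hsD⟩ := hg.reverse.exists_dist_proj_left_le hmem hnear hdichotomy
    (by rwa [dist_comm])
  rw [dist_comm q p] at hs
  exact ⟨dist p q - s, ⟨by linarith [hs.2], by linarith [hs.1]⟩, hsD⟩

end Dichotomy

theorem geodesic_passes_near_projections_general
    {X : Type*} [MetricSpace X]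
    (F : Set X)
    (π : X → X) (hmem : ∀ x, π x ∈ F) (hnear : ∀ x, ∀ z ∈ F, dist x (π x) ≤ dist x z)
    (D : ℝ) (hD : 0 < D)
    (hdichotomy : ∀ p q : X, ∀ g : ℝ → X, GeodSeg g p q →
      dist (π p) (π q) ≤ D ∨ ∃ t ∈ Icc (0 : ℝ) (dist p q), Metric.infDist (g t) F ≤ D) :
    ∃ D₂ : ℝ, 0 < D₂ ∧ ∀ p q : X, ∀ g : ℝ → X, GeodSeg g p q →
      D₂ < dist (π p) (π q) →
      (∃ s ∈ Icc (0 : ℝ) (dist p q), dist (g s) (π p) ≤ D₂) ∧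
      (∃ t ∈ Icc (0 : ℝ) (dist p q), dist (g t) (π q) ≤ D₂) := by
  refine ⟨2 * D, by linarith, fun p q g hg hfar => ?_⟩
  have hfarD : D < dist (π p) (π q) := by linarith
  exact ⟨hg.exists_dist_proj_left_le hmem hnear hdichotomy hfarD,
    hg.exists_dist_proj_right_le hmem hnear hdichotomy hfarD⟩

/-- In a geodesic space, if every geodesic either has endpoints projecting
`D`-close to each other on `F` or passes `D`-close to `F`, and every triangle
`Δ(p, q, π_F p)` with `q ∈ F` is `D`-thin, then there is `D₂ > 0` such that whenever
`dist (π_F p) (π_F q) > D₂`, the geodesic `[p, q]` passes within `D₂` of both `π_F p` and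
`π_F q`. -/
theorem geodesic_passes_near_projections
    {X : Type*} [MetricSpace X] (hX : IsGeodesicSpace X)
    (F : Set X) (hFne : F.Nonempty) (hFcl : IsClosed F)
    (π : X → X) (hmem : ∀ x, π x ∈ F) (hnear : ∀ x, ∀ z ∈ F, dist x (π x) ≤ dist x z)
    (D : ℝ) (hD : 0 < D)
    (hdichotomy : ∀ p q : X, ∀ g : ℝ → X, GeodSeg g p q →
      dist (π p) (π q) ≤ D ∨ ∃ t ∈ Icc (0 : ℝ) (dist p q), Metric.infDist (g t) F ≤ D)
    (hthin : ∀ p : X, ∀ q ∈ F, ∀ g₁ g₂ g₃ : ℝ → X,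
      GeodSeg g₁ p q → GeodSeg g₂ p (π p) → GeodSeg g₃ (π p) q →
      (∀ z ∈ SegImg g₁ p q, Metric.infDist z (SegImg g₂ p (π p) ∪ SegImg g₃ (π p) q) ≤ D) ∧
      (∀ z ∈ SegImg g₂ p (π p), Metric.infDist z (SegImg g₁ p q ∪ SegImg g₃ (π p) q) ≤ D) ∧
      (∀ z ∈ SegImg g₃ (π p) q, Metric.infDist z (SegImg g₁ p q ∪ SegImg g₂ p (π p)) ≤ D)) :
    ∃ D₂ : ℝ, 0 < D₂ ∧ ∀ p q : X, ∀ g : ℝ → X, GeodSeg g p q →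
      D₂ < dist (π p) (π q) →
      (∃ s ∈ Icc (0 : ℝ) (dist p q), dist (g s) (π p) ≤ D₂) ∧
      (∃ t ∈ Icc (0 : ℝ) (dist p q), dist (g t) (π q) ≤ D₂) :=
  geodesic_passes_near_projections_general F π hmem hnear D hD hdichotomy
end
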